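/- Let V be a finite-dimensional real vector space, let p, q ≥ 0, and let E be the space of all maps Φ : (V*)^p × V^q → ℝ that are ℝ-linear in each argument, with GL(V) acting linearly on E by (g·Φ)(ω_1, …, ω_p, v_1, …, v_q) = Φ(ω_1 ∘ g, …, ω_p ∘ g, g⁻¹ v_1, …, g⁻¹ v_q). If E' ⊆ E is a GL(V)-invariant linear subspace, then every GL(V)-invariant linear functional φ : E' → ℝ is the restriction to E' of a GL(V)-invariant linear functional on E. -/

import Mathlib

/-
Fix a basis of `V` and give `E` the inner product for which the coordinates
`Φ ↦ Φ(e^I, e_J)` are orthonormal. In these coordinates `g` acts by a matrix whose transpose is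
the matrix of `gᵀ`, so `gᵀ·–` is the adjoint of `g·–` and the orthogonal complement of an
invariant subspace `E'` is again invariant. The projection onto `E'` along that complement then
commutes with the action, and `φ` composed with it is an invariant extension.
-/

variable {V : Type*} [AddCommGroup V] [Module ℝ V] {p q : ℕ}

/-- The space `E` of multilinear functionals `(V*)^p × V^q → ℝ`, realized as
multilinear maps in `p` dual arguments with values in multilinear maps in `q` vector
arguments. -/
abbrev TensorFunctional (V : Type*) [AddCommGroup V] [Module ℝ V] (p q : ℕ) :=
  MultilinearMap ℝ (fun _ : Fin p => Module.Dual ℝ V)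
    (MultilinearMap ℝ (fun _ : Fin q => V) ℝ)

/-- Precomposition of the `q` vector arguments with `g⁻¹`, as a linear map. -/
def innerComp (g : V ≃ₗ[ℝ] V) :
    (MultilinearMap ℝ (fun _ : Fin q => V) ℝ) →ₗ[ℝ]
      (MultilinearMap ℝ (fun _ : Fin q => V) ℝ) where
  toFun Ψ := Ψ.compLinearMap fun _ => (g.symm : V →ₗ[ℝ] V)
  map_add' a b := by ext v; simp
  map_smul' c a := by ext v; simp

/-- The action of `GL(V)` on `E`: `(g·Φ)(ω₁,…,ω_p, v₁,…,v_q) =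
Φ(ω₁ ∘ g, …, ω_p ∘ g, g⁻¹v₁, …, g⁻¹v_q)`. -/
noncomputable def glAct (g : V ≃ₗ[ℝ] V) (Φ : TensorFunctional V p q) : TensorFunctional V p q :=
  (innerComp g).compMultilinearMap
    (Φ.compLinearMap fun _ => LinearMap.dualMap (g : V →ₗ[ℝ] V))

section InvariantComplement

variable {R E M G : Type*} [Ring R] [AddCommGroup E] [Module R E] [AddCommGroup M] [Module R M]

theorem exists_invariant_extension_of_isCompl (ρ : G → Module.End R E) {E' F : Submodule R E}
    (hc : IsCompl E' F) (hE' : ∀ g, E' ∈ (ρ g).invtSubmodule)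
    (hF : ∀ g, F ∈ (ρ g).invtSubmodule) (φ : E' →ₗ[R] M)
    (hφ : ∀ g x (hx : x ∈ E'), φ ⟨ρ g x, hE' g hx⟩ = φ ⟨x, hx⟩) :
    ∃ ψ : E →ₗ[R] M, (∀ g x, ψ (ρ g x) = ψ x) ∧ ∀ x : E', ψ x = φ x := by
  refine ⟨φ ∘ₗ E'.projectionOnto F hc, fun g x => ?_, fun x => by simp⟩
  have hcomm : Commute (E'.projection F hc) (ρ g) :=
    (LinearMap.IsIdempotentElem.commute_iff (Submodule.isIdempotentElem_projection hc)).mpr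
      ⟨(Submodule.range_projection hc).symm ▸ hE' g,
        (Submodule.ker_projection hc).symm ▸ hF g⟩
  calc φ (E'.projectionOnto F hc (ρ g x))
      = φ ⟨ρ g (E'.projection F hc x), hE' g (by simp)⟩ :=
        congrArg φ (Subtype.ext (LinearMap.congr_fun hcomm x))
    _ = φ (E'.projectionOnto F hc x) := hφ g _ (Submodule.projection_apply_mem hc x)

end InvariantComplement

namespace LinearMap.BilinForm

variable {K E : Type*} [Field K] [AddCommGroup E] [Module K E]

theorem orthogonal_mem_invtSubmodule (B : LinearMap.BilinForm K E) {T T' : Module.End K E}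
    (hTT' : IsAdjointPair B B T' T) {N : Submodule K E} (hN : N ∈ T'.invtSubmodule) :
    B.orthogonal N ∈ T.invtSubmodule := fun y hy x hx => by
  change B x (T y) = 0
  rw [← hTT']
  exact hy _ (hN hx)

theorem isCompl_orthogonal_of_anisotropic [FiniteDimensional K E] (B : LinearMap.BilinForm K E)
    (hB : B.IsRefl) (hB₀ : ∀ x, B x x = 0 → x = 0) (N : Submodule K E) :
    IsCompl N (B.orthogonal N) :=
  (isCompl_orthogonal_iff_disjoint hB).mpr <| Submodule.disjoint_def.mpr fun x hxN hx =>
    hB₀ x (hx x hxN)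

end LinearMap.BilinForm

namespace Module.Basis

variable {ι : Type*} [DecidableEq ι] [Finite ι]

-- `b.toDualEquiv` identifies `V` with `V*` through the inner product making `b` orthonormal.
noncomputable def transposeEquiv (b : Basis ι ℝ V) (g : V ≃ₗ[ℝ] V) : V ≃ₗ[ℝ] V :=
  b.toDualEquiv.trans (g.dualMap.trans b.toDualEquiv.symm)

theorem repr_transposeEquiv (b : Basis ι ℝ V) (g : V ≃ₗ[ℝ] V) (i k : ι) :
    b.repr (b.transposeEquiv g (b k)) i = b.repr (g (b i)) k := by
  rw [← toDual_apply_left, ← toDualEquiv_apply, transposeEquiv]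
  simp [toDual_apply_right]

theorem transposeEquiv_symm (b : Basis ι ℝ V) (g : V ≃ₗ[ℝ] V) :
    (b.transposeEquiv g).symm = b.transposeEquiv g.symm := by
  ext x
  simp [transposeEquiv, LinearEquiv.dualMap_symm]

end Module.Basis

noncomputable def glActLinear (g : V ≃ₗ[ℝ] V) : Module.End ℝ (TensorFunctional V p q) where
  toFun := glAct g
  map_add' Φ Ψ := by ext; simp [glAct, innerComp]
  map_smul' c Φ := by ext; simp [glAct, innerComp]

theorem glActLinear_apply (g : V ≃ₗ[ℝ] V) (Φ : TensorFunctional V p q) :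
    glActLinear g Φ = glAct g Φ := rfl

section TensorCoordinates

open Matrix

variable {ι : Type*} [DecidableEq ι] [Fintype ι] (b : Module.Basis ι ℝ V)

noncomputable def tensorCoord :
    TensorFunctional V p q →ₗ[ℝ] ((Fin p → ι) × (Fin q → ι) → ℝ) where
  toFun Φ IJ := Φ (fun a => b.dualBasis (IJ.1 a)) (fun j => b (IJ.2 j))
  map_add' Φ Ψ := by ext; simp
  map_smul' c Φ := by ext; simp

theorem tensorCoord_injective : Function.Injective (tensorCoord (p := p) (q := q) b) := by
  intro Φ Ψ h
  refine Module.Basis.ext_multilinear (fun _ => b.dualBasis) fun I => ?_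
  exact Module.Basis.ext_multilinear (fun _ => b) fun J => congr_fun h (I, J)

noncomputable def glMatrix (g : V ≃ₗ[ℝ] V) :
    Matrix ((Fin p → ι) × (Fin q → ι)) ((Fin p → ι) × (Fin q → ι)) ℝ :=
  Matrix.of fun IJ KL =>
    (∏ a, b.repr (g (b (KL.1 a))) (IJ.1 a)) * ∏ j, b.repr (g.symm (b (IJ.2 j))) (KL.2 j)

theorem glMatrix_transposeEquiv (g : V ≃ₗ[ℝ] V) :
    glMatrix (p := p) (q := q) b (b.transposeEquiv g) = (glMatrix b g)ᵀ := by
  ext IJ KL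
  simp [glMatrix, b.transposeEquiv_symm, b.repr_transposeEquiv]

theorem tensorCoord_glAct (g : V ≃ₗ[ℝ] V) (Φ : TensorFunctional V p q) :
    tensorCoord b (glAct g Φ) = glMatrix b g *ᵥ tensorCoord b Φ := by
  ext ⟨I, J⟩
  have hdual : ∀ i, (b.dualBasis i).comp (g : V →ₗ[ℝ] V) =
      ∑ k, b.repr (g (b k)) i • b.dualBasis k := fun i => by
    rw [b.coe_dualBasis, ← b.sum_dual_apply_smul_coord ((b.coord i).comp (g : V →ₗ[ℝ] V))]
    simp
  have hvec : ∀ j, g.symm (b (J j)) = ∑ l, b.repr (g.symm (b (J j))) l • b l :=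
    fun j => (b.sum_repr _).symm
  change Φ (fun a => (b.dualBasis (I a)).comp (g : V →ₗ[ℝ] V))
    (fun j => g.symm (b (J j))) = _
  rw [funext fun a => hdual (I a), MultilinearMap.map_sum, funext hvec]
  simp only [MultilinearMap.map_smul_univ, _root_.smul_apply, MultilinearMap.map_sum,
    _root_.sum_apply, mulVec, dotProduct, Fintype.sum_prod_type, glMatrix, tensorCoord, of_apply,
    LinearMap.coe_mk, AddHom.coe_mk, smul_eq_mul, Finset.mul_sum, mul_assoc]

noncomputable def tensorForm : LinearMap.BilinForm ℝ (TensorFunctional V p q) :=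
  (dotProductBilin ℝ ℝ).compl₁₂ (tensorCoord b) (tensorCoord b)

theorem tensorForm_apply (Φ Ψ : TensorFunctional V p q) :
    tensorForm b Φ Ψ = tensorCoord b Φ ⬝ᵥ tensorCoord b Ψ := rfl

theorem tensorForm_isRefl : (tensorForm (p := p) (q := q) b).IsRefl := fun Φ Ψ h => by
  rwa [tensorForm_apply, dotProduct_comm, ← tensorForm_apply]

theorem eq_zero_of_tensorForm_self_eq_zero (Φ : TensorFunctional V p q)
    (h : tensorForm b Φ Φ = 0) : Φ = 0 :=
  tensorCoord_injective b <| by rw [map_zero]; exact dotProduct_self_eq_zero.mp h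

theorem isAdjointPair_tensorForm_glAct (g : V ≃ₗ[ℝ] V) :
    LinearMap.IsAdjointPair (tensorForm b) (tensorForm b)
      (glActLinear (p := p) (q := q) (b.transposeEquiv g)) (glActLinear g) := fun Φ Ψ => by
  rw [tensorForm_apply, tensorForm_apply, glActLinear_apply, glActLinear_apply, tensorCoord_glAct,
    tensorCoord_glAct, glMatrix_transposeEquiv, mulVec_transpose, dotProduct_mulVec]

end TensorCoordinates

/-- Semisimplicity of tensor representations of `GL(V)`: every `GL(V)`-invariant
linear functional on a `GL(V)`-invariant subspace `E' ⊆ E` extends to a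
`GL(V)`-invariant linear functional on all of `E`. -/
theorem invariant_functional_extends
    (V : Type*) [AddCommGroup V] [Module ℝ V] [FiniteDimensional ℝ V] (p q : ℕ)
    (E' : Submodule ℝ (TensorFunctional V p q))
    (hE' : ∀ (g : V ≃ₗ[ℝ] V) (Φ : TensorFunctional V p q), Φ ∈ E' → glAct g Φ ∈ E')
    (φ : E' →ₗ[ℝ] ℝ)
    (hφ : ∀ (g : V ≃ₗ[ℝ] V) (Φ : TensorFunctional V p q) (hΦ : Φ ∈ E'),
        φ ⟨glAct g Φ, hE' g Φ hΦ⟩ = φ ⟨Φ, hΦ⟩) :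
    ∃ ψ : TensorFunctional V p q →ₗ[ℝ] ℝ,
      (∀ (g : V ≃ₗ[ℝ] V) (Φ : TensorFunctional V p q), ψ (glAct g Φ) = ψ Φ) ∧
      (∀ x : E', ψ (x : TensorFunctional V p q) = φ x) := by
  let b := Module.finBasis ℝ V
  let B := tensorForm (p := p) (q := q) b
  have hE'_invt : ∀ g, E' ∈ (glActLinear g).invtSubmodule := hE'
  have hc : IsCompl E' (B.orthogonal E') :=
    B.isCompl_orthogonal_of_anisotropic (E := TensorFunctional V p q) (tensorForm_isRefl b)
      (eq_zero_of_tensorForm_self_eq_zero b) E'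
  have horth_invt : ∀ g, B.orthogonal E' ∈ (glActLinear g).invtSubmodule := fun g =>
    B.orthogonal_mem_invtSubmodule (K := ℝ) (E := TensorFunctional V p q)
      (isAdjointPair_tensorForm_glAct b g) (hE'_invt _)
  exact exists_invariant_extension_of_isCompl (E := TensorFunctional V p q) glActLinear hc
    hE'_invt horth_invt φ hφ
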